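/- Let μ > 0, ε ∈ (0, μ/(3e)) and δ ∈ (0,1). Then the solution of the Bernoulli initial value problem y'(t) = (μ - ε e^{-δ t}) y(t) - μ e^{ε} y(t)^2 with y(0) = y₀ > 0 satisfies y(t) ≥ ( e^{ε/δ + ε}/y₀ + μ e^{ε}/(μ - ε) )^{-1} for all t ≥ 0. -/

import Mathlib

/-!
The constant `c = M⁻¹`, with `M = e^{ε/δ+ε}/y₀ + μe^ε/(μ-ε)`, is a barrier from below.
Since `M > μe^ε/(μ-ε)` we have `μe^ε c < μ - ε`, so whenever `y t = c` the right-hand side is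
`(μ - εe^{-δt}) c - μe^ε c² ≥ c((μ - ε) - μe^ε c) > 0`; and `c ≤ y₀` because `M ≥ 1/y₀`.
A differentiable function starting above `c` with positive derivative wherever it equals `c`
never drops below `c`.
-/

open Real

theorem le_of_hasDerivAt_pos_of_eq {y y' : ℝ → ℝ} {a c : ℝ}
    (hy : ∀ t, a ≤ t → HasDerivAt y (y' t) t) (ha : c ≤ y a)
    (hc : ∀ t, a ≤ t → y t = c → 0 < y' t) {t : ℝ} (ht : a ≤ t) : c ≤ y t := by
  have hbound : -y t ≤ -c :=
    image_le_of_deriv_right_lt_deriv_boundary (f := fun s => -y s) (f' := fun s => -y' s)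
      (B := fun _ => -c) (B' := 0)
      (fun s hs => (hy s hs.1).continuousAt.neg.continuousWithinAt)
      (fun s hs => (hy s hs.1).neg.hasDerivWithinAt) (neg_le_neg ha)
      (fun _ => hasDerivAt_const _ _)
      (fun s hs hys => by simpa using hc s hs.1 (neg_inj.mp hys)) ⟨ht, le_rfl⟩
  exact neg_le_neg_iff.mp hbound

theorem stmt_4 (μ ε δ y₀ : ℝ) (hμ : 0 < μ) (hε : 0 < ε) (hεμ : ε < μ / (3 * Real.exp 1))
    (hδ : δ ∈ Set.Ioo (0 : ℝ) 1) (hy₀ : 0 < y₀) (y : ℝ → ℝ)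
    (hy : ∀ t, 0 ≤ t →
      HasDerivAt y ((μ - ε * Real.exp (-δ * t)) * y t - μ * Real.exp ε * (y t) ^ 2) t)
    (hinit : y 0 = y₀) :
    ∀ t, 0 ≤ t →
      (Real.exp (ε / δ + ε) / y₀ + μ * Real.exp ε / (μ - ε))⁻¹ ≤ y t := by
  have hμε : 0 < μ - ε :=
    sub_pos.mpr (hεμ.trans (div_lt_self hμ (by linarith [add_one_le_exp (1 : ℝ)])))
  set A := exp (ε / δ + ε) / y₀
  set B := μ * exp ε / (μ - ε)
  have hA : y₀⁻¹ ≤ A := by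
    rw [inv_eq_one_div]
    exact div_le_div_of_nonneg_right (one_le_exp (by have := hδ.1; positivity)) hy₀.le
  have hApos : 0 < A := lt_of_lt_of_le (inv_pos.mpr hy₀) hA
  have hB : 0 < B := by positivity
  have hc_pos : 0 < (A + B)⁻¹ := by positivity
  have hc_init : (A + B)⁻¹ ≤ y₀ := by
    simpa using inv_anti₀ (inv_pos.mpr hy₀) (by linarith : y₀⁻¹ ≤ A + B)
  have hc_level : μ * exp ε * (A + B)⁻¹ < μ - ε := by
    have := inv_strictAnti₀ hB (by linarith : B < A + B)
    rw [inv_div] at this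
    rwa [lt_div_iff₀' (by positivity)] at this
  intro t ht
  refine le_of_hasDerivAt_pos_of_eq hy (hinit ▸ hc_init) (fun s hs hys => ?_) ht
  have hdecay : exp (-δ * s) ≤ 1 := exp_le_one_iff.mpr (by nlinarith [hδ.1])
  rw [hys]
  nlinarith [mul_pos hε hc_pos]
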